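/- arXiv:2307.07174 — 3 statements merged into one kernel-verified Lean document; each statement's English description precedes it below -/
import Mathlib

section
/- Consider a customer attraction game in which every agent has weight 1. For every strategy profile S, define Φ(S) = ∑_{j∈N} v_j · ∑_{k=1}^{c(j,S)} 1/k. Then a strategy profile S is a pure Nash equilibrium if and only if Φ(S'_i, S_{-i}) ≤ Φ(S) for every agent i and every S'_i ∈ 𝒮_i, i.e., the pure Nash equilibria are exactly the local maxima of Φ with respect to single-agent deviations. -/
open Finset

/-- A customer attraction game: nodes `N` with integer values `≥ 1`, agents `A`
with integer weights `≥ 1`, and a nonempty finite strategy space (a finite set of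
subsets of `N`) for each agent. -/
structure CAG (N A : Type*) [Fintype N] [Fintype A] where
  v : N → ℕ
  v_pos : ∀ j, 1 ≤ v j
  w : A → ℕ
  w_pos : ∀ i, 1 ≤ w i
  strat : A → Finset (Finset N)
  strat_ne : ∀ i, (strat i).Nonempty

variable {N A : Type*} [Fintype N] [Fintype A] [DecidableEq N]

/-- The load `c(j,S)` of node `j`: total weight of agents attracting `j`. -/
def CAG.load (G : CAG N A) (S : A → Finset N) (j : N) : ℕ :=
  ∑ i : A, if j ∈ S i then G.w i else 0

/-- The utility `U_i(S) = ∑_{j ∈ S_i} v_j · w_i / c(j,S)`. -/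
noncomputable def CAG.util (G : CAG N A) (S : A → Finset N) (i : A) : ℝ :=
  ∑ j ∈ S i, (G.v j : ℝ) * (G.w i : ℝ) / (G.load S j : ℝ)

/-- A strategy profile: each agent plays a strategy from her strategy space. -/
def CAG.valid (G : CAG N A) (S : A → Finset N) : Prop :=
  ∀ i, S i ∈ G.strat i

/-- Pure Nash equilibrium. -/
def CAG.PNE [DecidableEq A] (G : CAG N A) (S : A → Finset N) : Prop :=
  G.valid S ∧ ∀ i, ∀ S' ∈ G.strat i, G.util (Function.update S i S') i ≤ G.util S i

/-- Social welfare. -/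
noncomputable def CAG.sw (G : CAG N A) (S : A → Finset N) : ℝ :=
  ∑ i : A, G.util S i

/-- The harmonic number `H_c = ∑_{k=1}^{c} 1/k`. -/
noncomputable def harm (c : ℕ) : ℝ := ∑ k ∈ Finset.range c, (1 : ℝ) / (k + 1)

/-- Rosenthal-type potential `Φ(S) = ∑_j v_j ∑_{k=1}^{c(j,S)} 1/k`. -/
noncomputable def CAG.pot (G : CAG N A) (S : A → Finset N) : ℝ :=
  ∑ j : N, (G.v j : ℝ) * harm (G.load S j)


lemma harm_succ (n : ℕ) : harm (n + 1) = harm n + 1 / (n + 1) := by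
  unfold harm
  rw [Finset.sum_range_succ]

lemma CAG.load_update [DecidableEq A] (G : CAG N A) (S : A → Finset N) (i : A)
    (S' : Finset N) (j : N) :
    G.load (Function.update S i S') j + (if j ∈ S i then G.w i else 0)
      = G.load S j + (if j ∈ S' then G.w i else 0) := by
  unfold CAG.load
  rw [← Finset.sum_erase_add _ _ (Finset.mem_univ i),
      ← Finset.sum_erase_add _ _ (Finset.mem_univ i)]
  have h : ∀ k ∈ Finset.univ.erase i,
      (if j ∈ Function.update S i S' k then G.w k else 0)
        = (if j ∈ S k then G.w k else 0) := by
    intro k hk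
    rw [Function.update_of_ne (Finset.mem_erase.mp hk).1]
  rw [Finset.sum_congr rfl h, Function.update_self]
  ring

lemma pot_diff [DecidableEq A] (G : CAG N A) (hw : ∀ i, G.w i = 1)
    (S : A → Finset N) (i : A) (S' : Finset N) :
    G.pot (Function.update S i S') - G.pot S
      = G.util (Function.update S i S') i - G.util S i := by
  set T := Function.update S i S' with hT
  have hTi : T i = S' := Function.update_self i S' S
  have hutil : ∀ (P : A → Finset N) (Q : Finset N), P i = Q →
      G.util P i = ∑ j : N, (if j ∈ Q then (G.v j : ℝ) / (G.load P j : ℝ) else 0) := by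
    intro P Q hPQ
    unfold CAG.util
    rw [hPQ, ← Finset.sum_filter, Finset.filter_mem_eq_inter, Finset.univ_inter]
    apply Finset.sum_congr rfl
    intro j _
    rw [hw i]
    push_cast
    ring
  rw [hutil T S' hTi, hutil S (S i) rfl]
  unfold CAG.pot
  rw [← Finset.sum_sub_distrib, ← Finset.sum_sub_distrib]
  apply Finset.sum_congr rfl
  intro j _
  have hload := G.load_update S i S' j
  rw [hw i, ← hT] at hload
  by_cases h1 : j ∈ S i <;> by_cases h2 : j ∈ S' <;> simp only [h1, h2, if_true, if_false, add_zero] at hload <;> simp [h1, h2]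
  · -- both: loads equal
    have : G.load T j = G.load S j := by omega
    rw [this]; ring
  · -- in S i, not S' : load S j = load T j + 1
    have : G.load S j = G.load T j + 1 := by omega
    rw [this, harm_succ]
    push_cast
    ring
  · -- not in S i, in S' : load T j = load S j + 1
    have : G.load T j = G.load S j + 1 := by omega
    rw [this, harm_succ]
    push_cast
    ring
  · have : G.load T j = G.load S j := by omega
    rw [this]; ring

/-- In a customer attraction game where every agent has weight 1, a
strategy profile is a pure Nash equilibrium iff it is a local maximum of the
potential `Φ` with respect to single-agent deviations. -/
theorem PNE_iff_local_max_potential [DecidableEq A]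
    (G : CAG N A) (hw : ∀ i, G.w i = 1)
    (S : A → Finset N) (hS : G.valid S) :
    G.PNE S ↔ ∀ i, ∀ S' ∈ G.strat i, G.pot (Function.update S i S') ≤ G.pot S := by
  unfold CAG.PNE
  constructor
  · rintro ⟨-, h⟩ i S' hS'
    have hd := pot_diff G hw S i S'
    have := h i S' hS'
    linarith
  · intro h
    refine ⟨hS, fun i S' hS' => ?_⟩
    have hd := pot_diff G hw S i S'
    have := h i S' hS'
    linarith
end

section
/- Consider a customer attraction game and define ψ(t) = ln(max(e^{-1}, t)) and Ψ(S) = ∑_{j∈N} v_j · ψ(c(j,S)). Let i be an agent, S a strategy profile, S'_i ∈ 𝒮_i an alternative strategy, and set α = ln(1 + w_i) + 1. If U_i(S'_i, S_{-i}) > α · U_i(S), then Ψ(S'_i, S_{-i}) > Ψ(S). -/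
open Finset

variable {N A : Type*} [Fintype N] [Fintype A] [DecidableEq N]

/-- `ψ(t) = ln(max(e⁻¹, t))`. -/
noncomputable def psi (t : ℝ) : ℝ := Real.log (max (Real.exp (-1)) t)

/-- The potential `Ψ(S) = ∑_j v_j ψ(c(j,S))`. -/
noncomputable def CAG.Psi (G : CAG N A) (S : A → Finset N) : ℝ :=
  ∑ j : N, (G.v j : ℝ) * psi (G.load S j : ℝ)

/-! Compare `Ψ(S') - Ψ(S)` with `U_i(S') - α U_i(S)` node by node, writing `c` for the load
of the other agents on a node `j` and `w = w_i`. On a node that `i` joins, concavity of `log`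
(`log x ≤ x - 1`) makes `ψ` grow by at least `w / (c + w)`, which is exactly `i`'s new share.
On a node that `i` leaves, `ψ` drops by `log ((c + w) / c)`, which is at most both `w / c` and
`log (1 + w)`, hence at most `α w / (c + w)`; the floor `ψ(0) = -1` covers `c = 0`. Shared
and untouched nodes contribute nothing to `Ψ` and at most `0` on the utility side. -/

lemma psi_zero : psi 0 = -1 := by
  rw [psi, max_eq_left (Real.exp_pos _).le, Real.log_exp]

lemma psi_of_one_le {t : ℝ} (ht : 1 ≤ t) : psi t = Real.log t := by
  have : Real.exp (-1) ≤ t := (Real.exp_le_one_iff.mpr (by norm_num)).trans ht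
  rw [psi, max_eq_right this]

lemma div_add_le_psi_add_sub_psi (c : ℕ) {w : ℝ} (hw : 1 ≤ w) :
    w / (c + w) ≤ psi (c + w) - psi c := by
  rcases Nat.eq_zero_or_pos c with rfl | hc
  · rw [Nat.cast_zero, zero_add, psi_zero, psi_of_one_le hw, div_self (by positivity)]
    linarith [Real.log_nonneg hw]
  · have hc1 : (1 : ℝ) ≤ c := by exact_mod_cast hc
    have hc0 : (0 : ℝ) < c := by linarith
    rw [psi_of_one_le (by linarith), psi_of_one_le hc1]
    have := Real.log_le_sub_one_of_pos (show (0 : ℝ) < c / (c + w) by positivity)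
    rw [Real.log_div hc0.ne' (by positivity)] at this
    have hfrac : (c : ℝ) / (c + w) - 1 = -(w / (c + w)) := by field_simp; ring
    linarith

lemma psi_add_sub_psi_le (d : ℕ) {w : ℝ} (hw : 1 ≤ w) :
    psi (d + w) - psi d ≤ (Real.log (1 + w) + 1) * (w / (d + w)) := by
  rcases Nat.eq_zero_or_pos d with rfl | hd
  · rw [Nat.cast_zero, zero_add, psi_zero, psi_of_one_le hw, div_self (by positivity)]
    linarith [Real.log_le_log (by linarith) (by linarith : w ≤ 1 + w)]
  · have hd1 : (1 : ℝ) ≤ d := by exact_mod_cast hd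
    have hd0 : (0 : ℝ) < d := by linarith
    have hdw : (0 : ℝ) < d + w := by linarith
    rw [psi_of_one_le (by linarith), psi_of_one_le hd1, ← Real.log_div hdw.ne' hd0.ne']
    set L := Real.log ((d + w) / d)
    -- Adding `d L ≤ w` to `w L ≤ w log (1 + w)` gives `(d + w) L ≤ w (log (1 + w) + 1)`.
    have hL_le_div : d * L ≤ w := by
      have := Real.log_le_sub_one_of_pos (show (0 : ℝ) < (d + w) / d by positivity)
      have hfrac : ((d : ℝ) + w) / d - 1 = w / d := by field_simp; ring
      rw [hfrac, le_div_iff₀ hd0] at this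
      linarith
    have hL_le_log : L ≤ Real.log (1 + w) := by
      refine Real.log_le_log (by positivity) ?_
      rw [div_le_iff₀ hd0]
      nlinarith
    rw [mul_div_assoc', le_div_iff₀ hdw]
    nlinarith

lemma CAG.load_eq_load_update_empty_add [DecidableEq A] (G : CAG N A) (S : A → Finset N)
    (i : A) (j : N) :
    G.load S j = G.load (Function.update S i ∅) j + if j ∈ S i then G.w i else 0 := by
  unfold CAG.load
  rw [← Finset.sum_erase_add _ _ (Finset.mem_univ i),
    ← Finset.sum_erase_add _ _ (Finset.mem_univ i), Function.update_self,
    if_neg (Finset.notMem_empty j), add_zero]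
  congr 1
  refine Finset.sum_congr rfl fun k hk => ?_
  rw [Function.update_of_ne (Finset.ne_of_mem_erase hk)]

lemma CAG.util_eq_sum_univ (G : CAG N A) (S : A → Finset N) (i : A) :
    G.util S i = ∑ j, if j ∈ S i then (G.v j : ℝ) * G.w i / G.load S j else 0 := by
  rw [CAG.util, Finset.sum_ite_mem, Finset.univ_inter]

lemma ite_sub_mul_ite_le_mul_psi_sub (c : ℕ) {v w : ℝ} (hv : 0 ≤ v) (hw : 1 ≤ w)
    (p q : Prop) [Decidable p] [Decidable q] :
    (if q then v * w / (c + w) else 0) - (Real.log (1 + w) + 1) * (if p then v * w / (c + w) else 0)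
      ≤ v * (psi (c + if q then w else 0) - psi (c + if p then w else 0)) := by
  have hlog : 0 ≤ Real.log (1 + w) := Real.log_nonneg (by linarith)
  by_cases hq : q <;> by_cases hp : p <;> simp only [hp, hq, if_true, if_false, add_zero, sub_self,
    mul_zero, sub_zero, zero_sub]
  · have : 0 ≤ v * w / (c + w) := by positivity
    nlinarith
  · rw [mul_div_assoc]
    exact mul_le_mul_of_nonneg_left (div_add_le_psi_add_sub_psi c hw) hv
  · rw [mul_div_assoc, mul_left_comm, neg_le, ← mul_neg, neg_sub]
    exact mul_le_mul_of_nonneg_left (psi_add_sub_psi_le c hw) hv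
  · exact le_rfl

lemma CAG.util_update_sub_le_Psi_update_sub [DecidableEq A] (G : CAG N A) (S : A → Finset N)
    (i : A) (S' : Finset N) :
    G.util (Function.update S i S') i - (Real.log (1 + G.w i) + 1) * G.util S i
      ≤ G.Psi (Function.update S i S') - G.Psi S := by
  set T := Function.update S i S'
  have hTi : T i = S' := Function.update_self i S' S
  -- Both profiles share the load `c` of the agents other than `i`.
  set c : N → ℕ := G.load (Function.update S i ∅)
  have hS : ∀ j, G.load S j = c j + if j ∈ S i then G.w i else 0 :=
    G.load_eq_load_update_empty_add S i
  have hT : ∀ j, G.load T j = c j + if j ∈ S' then G.w i else 0 := fun j => by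
    rw [G.load_eq_load_update_empty_add T i j, Function.update_idem, hTi]
  rw [G.util_eq_sum_univ, G.util_eq_sum_univ, hTi, CAG.Psi, CAG.Psi,
    Finset.mul_sum, ← Finset.sum_sub_distrib, ← Finset.sum_sub_distrib]
  refine Finset.sum_le_sum fun j _ => ?_
  have hnode := ite_sub_mul_ite_le_mul_psi_sub (c j) (Nat.cast_nonneg (G.v j))
    (by exact_mod_cast G.w_pos i : (1 : ℝ) ≤ G.w i) (j ∈ S i) (j ∈ S')
  rw [hS, hT, ← mul_sub]
  push_cast
  split_ifs at hnode ⊢ <;> simpa only [Nat.cast_zero, add_zero] using hnode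

theorem Psi_increases_on_alpha_improving_deviation_general [DecidableEq A]
    (G : CAG N A) (S : A → Finset N)
    (i : A) (S' : Finset N)
    (h : (Real.log (1 + (G.w i : ℝ)) + 1) * G.util S i
          < G.util (Function.update S i S') i) :
    G.Psi S < G.Psi (Function.update S i S') := by
  linarith [G.util_update_sub_le_Psi_update_sub S i S']

/-- If agent `i` deviates and improves her utility by more than the
factor `α = ln(1 + w_i) + 1`, then the potential `Ψ` strictly increases. -/
theorem Psi_increases_on_alpha_improving_deviation [DecidableEq A]
    (G : CAG N A) (S : A → Finset N) (hS : G.valid S)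
    (i : A) (S' : Finset N) (hS' : S' ∈ G.strat i)
    (h : (Real.log (1 + (G.w i : ℝ)) + 1) * G.util S i
          < G.util (Function.update S i S') i) :
    G.Psi S < G.Psi (Function.update S i S') :=
  Psi_increases_on_alpha_improving_deviation_general G S i S' h
end

section
/- Consider any customer attraction game (with arbitrary weights, values, and strategy spaces) and any α ≥ 1. If S^α is an α-approximate pure Nash equilibrium, then for every strategy profile S it holds that SW(S) ≤ (1+α) · SW(S^α). In particular (taking α = 1), the price of anarchy over pure Nash equilibria is at most 2. -/
open Finset

variable {N A : Type*} [Fintype N] [Fintype A] [DecidableEq N]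

/-- `α`-approximate pure Nash equilibrium. -/
def CAG.approxPNE [DecidableEq A] (G : CAG N A) (α : ℝ) (S : A → Finset N) : Prop :=
  G.valid S ∧ ∀ i, ∀ S' ∈ G.strat i,
    G.util (Function.update S i S') i ≤ α * G.util S i

/-! Under proportional sharing the welfare of a profile is the total value of the nodes it
attracts. An agent deviating alone from `Sα` to her strategy in `S` is the only attractor of
every node of `S i` that `Sα` leaves unattracted, so she collects its full value. Summing over
agents, the nodes attracted by `S` but not by `Sα` are worth at most
`∑ i, U_i(S i, Sα₋ᵢ) ≤ α · SW(Sα)`, and the other nodes of `S` at most `SW(Sα)`. -/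

theorem Finset.sum_biUnion_le_sum_sum {ι α M : Type*} [DecidableEq α] [AddCommMonoid M]
    [PartialOrder M] [IsOrderedAddMonoid M] {s : Finset ι} {t : ι → Finset α} {f : α → M}
    (hf : ∀ x, 0 ≤ f x) : ∑ x ∈ s.biUnion t, f x ≤ ∑ i ∈ s, ∑ x ∈ t i, f x := by
  classical
  induction s using Finset.induction_on with
  | empty => simp
  | insert a s has ih =>
    rw [biUnion_insert, sum_insert has]
    calc ∑ x ∈ t a ∪ s.biUnion t, f x
        ≤ ∑ x ∈ t a ∪ s.biUnion t, f x + ∑ x ∈ t a ∩ s.biUnion t, f x :=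
          le_add_of_nonneg_right (sum_nonneg fun x _ => hf x)
      _ = ∑ x ∈ t a, f x + ∑ x ∈ s.biUnion t, f x := sum_union_inter
      _ ≤ ∑ x ∈ t a, f x + ∑ i ∈ s, ∑ x ∈ t i, f x := add_le_add_right ih _

namespace CAG

variable (G : CAG N A)

lemma load_eq_sum_filter (S : A → Finset N) (j : N) :
    G.load S j = ∑ i with j ∈ S i, G.w i :=
  (sum_filter _ _).symm

lemma load_pos_of_mem {S : A → Finset N} {i : A} {j : N} (h : j ∈ S i) : 0 < G.load S j := by
  rw [load_eq_sum_filter]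
  exact lt_of_lt_of_le (G.w_pos i) (single_le_sum (fun _ _ => Nat.zero_le _) (by simpa using h))

lemma sw_eq_sum_biUnion (S : A → Finset N) : G.sw S = ∑ j ∈ univ.biUnion S, (G.v j : ℝ) := by
  unfold sw util
  rw [sum_comm' (t' := univ.biUnion S) (s' := fun j => {i | j ∈ S i})
    fun i j => by simpa using fun h => ⟨i, h⟩]
  refine sum_congr rfl fun j hj => ?_
  obtain ⟨i, -, hi⟩ := mem_biUnion.mp hj
  have hload : (0 : ℝ) < ∑ i with j ∈ S i, (G.w i : ℝ) := by
    exact_mod_cast G.load_eq_sum_filter S j ▸ G.load_pos_of_mem hi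
  rw [← sum_div, ← mul_sum, G.load_eq_sum_filter, Nat.cast_sum, mul_div_assoc,
    div_self hload.ne', mul_one]

lemma load_update_of_notMem_biUnion [DecidableEq A] {S : A → Finset N} {i : A} {T : Finset N}
    {j : N} (hj : j ∉ univ.biUnion S) (hT : j ∈ T) :
    G.load (Function.update S i T) j = G.w i := by
  rw [load, sum_eq_single i]
  · simp [hT]
  · intro k _ hk
    simp_all
  · simp

lemma sum_sdiff_biUnion_le_util_update [DecidableEq A] (S : A → Finset N) (i : A)
    (T : Finset N) :
    ∑ j ∈ T \ univ.biUnion S, (G.v j : ℝ) ≤ G.util (Function.update S i T) i := by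
  unfold util
  rw [Function.update_self]
  have hw : (0 : ℝ) < G.w i := by exact_mod_cast G.w_pos i
  calc ∑ j ∈ T \ univ.biUnion S, (G.v j : ℝ)
      = ∑ j ∈ T \ univ.biUnion S, (G.v j : ℝ) * G.w i / G.load (Function.update S i T) j := by
        refine sum_congr rfl fun j hj => ?_
        obtain ⟨hT, hS⟩ := mem_sdiff.mp hj
        rw [G.load_update_of_notMem_biUnion hS hT, mul_div_assoc, div_self hw.ne', mul_one]
    _ ≤ ∑ j ∈ T, (G.v j : ℝ) * G.w i / G.load (Function.update S i T) j :=
        sum_le_sum_of_subset_of_nonneg sdiff_subset fun _ _ _ => by positivity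

theorem sw_le_sw_add_sum_util_update [DecidableEq A] (S S' : A → Finset N) :
    G.sw S' ≤ G.sw S + ∑ i, G.util (Function.update S i (S' i)) i := by
  have hv : ∀ j, (0 : ℝ) ≤ G.v j := fun j => Nat.cast_nonneg _
  calc G.sw S' = ∑ j ∈ univ.biUnion S', (G.v j : ℝ) := G.sw_eq_sum_biUnion S'
    _ ≤ ∑ j ∈ univ.biUnion S' \ univ.biUnion S ∪ univ.biUnion S, (G.v j : ℝ) :=
        sum_le_sum_of_subset_of_nonneg (by simp) fun j _ _ => hv j
    _ = G.sw S + ∑ j ∈ univ.biUnion (fun i => S' i \ univ.biUnion S), (G.v j : ℝ) := by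
        rw [sum_union sdiff_disjoint, add_comm, G.sw_eq_sum_biUnion S]
        congr 2
        ext j
        simp
    _ ≤ G.sw S + ∑ i, ∑ j ∈ S' i \ univ.biUnion S, (G.v j : ℝ) :=
        add_le_add_right (sum_biUnion_le_sum_sum hv) _
    _ ≤ G.sw S + ∑ i, G.util (Function.update S i (S' i)) i :=
        add_le_add_right (sum_le_sum fun i _ => G.sum_sdiff_biUnion_le_util_update S i (S' i)) _

theorem sw_le_of_approxPNE [DecidableEq A] {α : ℝ} {S : A → Finset N}
    (hS : G.approxPNE α S) {S' : A → Finset N} (hS' : G.valid S') :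
    G.sw S' ≤ (1 + α) * G.sw S :=
  calc G.sw S' ≤ G.sw S + ∑ i, G.util (Function.update S i (S' i)) i :=
        G.sw_le_sw_add_sum_util_update S S'
    _ ≤ G.sw S + ∑ i, α * G.util S i :=
        add_le_add_right (sum_le_sum fun i _ => hS.2 i (S' i) (hS' i)) _
    _ = (1 + α) * G.sw S := by rw [← mul_sum, sw]; ring

lemma PNE.approxPNE_one [DecidableEq A] {G : CAG N A} {S : A → Finset N} (hS : G.PNE S) :
    G.approxPNE 1 S :=
  ⟨hS.1, fun i S' hS' => (one_mul (G.util S i)).symm ▸ hS.2 i S' hS'⟩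

end CAG

/-- For any customer attraction game and any `α ≥ 1`, an
`α`-approximate pure Nash equilibrium `S^α` satisfies
`SW(S) ≤ (1+α)·SW(S^α)` for every profile `S`; in particular (with `α = 1`) every
pure Nash equilibrium achieves at least half of the optimal social welfare. -/
theorem approx_PNE_PoA_bound [DecidableEq A] (G : CAG N A) :
    (∀ α : ℝ, 1 ≤ α → ∀ Sα : A → Finset N, G.approxPNE α Sα →
      ∀ S : A → Finset N, G.valid S → G.sw S ≤ (1 + α) * G.sw Sα) ∧
    (∀ SNE : A → Finset N, G.PNE SNE →
      ∀ S : A → Finset N, G.valid S → G.sw S ≤ 2 * G.sw SNE) :=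
  ⟨fun _ _ _ hSα _ hS => G.sw_le_of_approxPNE hSα hS,
    fun _ hSNE _ hS => by
      simpa [one_add_one_eq_two] using G.sw_le_of_approxPNE hSNE.approxPNE_one hS⟩
end
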